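/- In ℂ² ⊗ ℂ² ⊗ ℂ², for every γ = (γ₀,γ₁) ∈ ℂ², the vector Σ_{j=0}^{1} γ_j (|0⟩⊗|j⟩⊗|1⟩ − |1⟩⊗|j⟩⊗|0⟩) is orthogonal to the vector (1,α) ⊗ (1,α²) ⊗ (1,α) for every α ∈ ℂ. Consequently, the orthogonal complement of the span of {(1,α) ⊗ (1,α²) ⊗ (1,α) : α ∈ ℂ} contains nonzero vectors that are biproduct across the bipartition AC|B, and hence is not a genuinely entangled subspace. (This shows that the choice 𝒜 = identity in the construction of maximal GESs from spanning families (1,α) ⊗ 𝒜(1,α,α²,α³) fails.) -/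

import Mathlib

noncomputable section

/-- The three-qubit (more generally, three-qudit) Hilbert space. -/
abbrev TriH (d₁ d₂ d₃ : ℕ) := EuclideanSpace ℂ (Fin d₁ × Fin d₂ × Fin d₃)

/-- `ψ` is biproduct across the bipartition `A|BC`. -/
def BiprodA {d₁ d₂ d₃ : ℕ} (ψ : TriH d₁ d₂ d₃) : Prop :=
  ∃ (a : Fin d₁ → ℂ) (g : Fin d₂ × Fin d₃ → ℂ), ∀ i j k, ψ (i, j, k) = a i * g (j, k)

/-- `ψ` is biproduct across the bipartition `B|AC`. -/
def BiprodB {d₁ d₂ d₃ : ℕ} (ψ : TriH d₁ d₂ d₃) : Prop :=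
  ∃ (b : Fin d₂ → ℂ) (g : Fin d₁ × Fin d₃ → ℂ), ∀ i j k, ψ (i, j, k) = b j * g (i, k)

/-- `ψ` is biproduct across the bipartition `C|AB`. -/
def BiprodC {d₁ d₂ d₃ : ℕ} (ψ : TriH d₁ d₂ d₃) : Prop :=
  ∃ (c : Fin d₃ → ℂ) (g : Fin d₁ × Fin d₂ → ℂ), ∀ i j k, ψ (i, j, k) = c k * g (i, j)

/-- A genuinely multiparty entangled (GME) tripartite vector: nonzero and not biproduct
across any of the three bipartitions. -/
def IsGME3 {d₁ d₂ d₃ : ℕ} (ψ : TriH d₁ d₂ d₃) : Prop :=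
  ψ ≠ 0 ∧ ¬ BiprodA ψ ∧ ¬ BiprodB ψ ∧ ¬ BiprodC ψ

/-- A genuinely entangled subspace (GES): all its nonzero vectors are GME. -/
def IsGES3 {d₁ d₂ d₃ : ℕ} (V : Submodule ℂ (TriH d₁ d₂ d₃)) : Prop :=
  ∀ ψ ∈ V, ψ ≠ 0 → IsGME3 ψ

/-- The family `(1,α) ⊗ (1,α²) ⊗ (1,α)` (the choice `𝒜 = 𝟙`). -/
def idCurve (α : ℂ) : TriH 2 2 2 :=
  WithLp.toLp 2 fun (p : Fin 2 × Fin 2 × Fin 2) => ![(1 : ℂ), α] p.1 * ![(1 : ℂ), α ^ 2] p.2.1 * ![(1 : ℂ), α] p.2.2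

/-- The vector `Σ_j γ_j (|0⟩⊗|j⟩⊗|1⟩ − |1⟩⊗|j⟩⊗|0⟩)`. -/
def singVec (γ : Fin 2 → ℂ) : TriH 2 2 2 :=
  WithLp.toLp 2 fun (p : Fin 2 × Fin 2 × Fin 2) => γ p.2.1 *
    (if p.1 = 0 ∧ p.2.2 = 1 then 1 else if p.1 = 1 ∧ p.2.2 = 0 then -1 else 0)

theorem Submodule.mem_orthogonal_span_of_forall_inner_eq_zero {𝕜 E : Type*} [RCLike 𝕜]
    [NormedAddCommGroup E] [InnerProductSpace 𝕜 E] {s : Set E} {v : E}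
    (h : ∀ u ∈ s, inner 𝕜 u v = 0) : v ∈ (Submodule.span 𝕜 s)ᗮ := by
  have hspan : Submodule.span 𝕜 s ≤ (𝕜 ∙ v)ᗮ :=
    Submodule.span_le.mpr fun u hu ↦ Submodule.mem_orthogonal_singleton_iff_inner_left.mpr (h u hu)
  exact fun u hu ↦ Submodule.mem_orthogonal_singleton_iff_inner_left.mp (hspan hu)

theorem not_isGES3_of_biprodB {d₁ d₂ d₃ : ℕ} {V : Submodule ℂ (TriH d₁ d₂ d₃)}
    {ψ : TriH d₁ d₂ d₃} (hψV : ψ ∈ V) (hψ : ψ ≠ 0) (hB : BiprodB ψ) : ¬ IsGES3 V :=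
  fun hV ↦ (hV ψ hψV hψ).2.2.1 hB

-- `idCurve α` has the same entry `α ^ (2j+1)` at `(0,j,1)` and `(1,j,0)`, which `singVec γ` weighs by `±γ j`.
theorem inner_idCurve_singVec (α : ℂ) (γ : Fin 2 → ℂ) :
    inner ℂ (idCurve α) (singVec γ) = 0 := by
  simp only [PiLp.inner_apply, Fintype.sum_prod_type, Fin.sum_univ_two, idCurve, singVec,
    RCLike.inner_apply, Matrix.cons_val_zero, Matrix.cons_val_one]
  norm_num
  ring

theorem singVec_mem_orthogonal_span_idCurve (γ : Fin 2 → ℂ) :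
    singVec γ ∈ (Submodule.span ℂ (Set.range idCurve))ᗮ :=
  Submodule.mem_orthogonal_span_of_forall_inner_eq_zero <| by
    rintro _ ⟨α, rfl⟩
    exact inner_idCurve_singVec α γ

theorem biprodB_singVec (γ : Fin 2 → ℂ) : BiprodB (singVec γ) :=
  ⟨γ, fun p ↦ if p.1 = 0 ∧ p.2 = 1 then 1 else if p.1 = 1 ∧ p.2 = 0 then -1 else 0,
    fun _ _ _ ↦ rfl⟩

theorem singVec_ne_zero {γ : Fin 2 → ℂ} (hγ : γ ≠ 0) : singVec γ ≠ 0 := by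
  obtain ⟨j, hj⟩ := Function.ne_iff.mp hγ
  intro h
  have h01 := congrArg (fun v : TriH 2 2 2 ↦ v (0, j, 1)) h
  simp only [singVec, PiLp.toLp_apply, PiLp.zero_apply] at h01
  exact hj (by simpa using h01)

theorem identity_matrix_fails (γ : Fin 2 → ℂ) :
    (∀ α : ℂ, (inner ℂ (idCurve α) (singVec γ) : ℂ) = 0) ∧
    (∃ ψ ∈ (Submodule.span ℂ (Set.range idCurve))ᗮ, ψ ≠ 0 ∧ BiprodB ψ) ∧
    ¬ IsGES3 ((Submodule.span ℂ (Set.range idCurve))ᗮ) := by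
  have hγ₀ : (![1, 0] : Fin 2 → ℂ) ≠ 0 := fun h ↦ one_ne_zero (congrFun h 0)
  have hψ := singVec_mem_orthogonal_span_idCurve ![1, 0]
  have hψ₀ := singVec_ne_zero hγ₀
  have hB := biprodB_singVec ![1, 0]
  exact ⟨(inner_idCurve_singVec · γ), ⟨_, hψ, hψ₀, hB⟩, not_isGES3_of_biprodB hψ hψ₀ hB⟩
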